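/- arXiv:2211.09703 — 3 statements merged into one kernel-verified Lean document; each statement's English description precedes it below -/
import Mathlib

section
/- The dependency coefficient of down-sampling vanishes off a sublattice: the coefficient α(u,v,u',v') relating F(X_d)[u,v] to F(X)[u',v'] satisfies α(u,v,u',v') = 0 unless u'-u is a multiple of 2H/k and v'-v is a multiple of 2W/k; and when u' - u = a·(2H/k) and v' - v = b·(2W/k) for integers a, b, α(u,v,u',v') = β(u',v')/k², where β(u',v') = Σ_{s=0}^{k-1} Σ_{t=0}^{k-1} w_{s,t}·exp(j2π(u's/(2H)+v't/(2W))). -/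
open Finset

noncomputable def dft (H W : ℤ) (X : ℤ → ℤ → ℂ) (u v : ℤ) : ℂ :=
  ∑ x ∈ Finset.Icc (-H) (H - 1), ∑ y ∈ Finset.Icc (-W) (W - 1),
    X x y * Complex.exp (-(2 * (Real.pi : ℂ) * Complex.I) *
      ((u : ℂ) * (x : ℂ) / (2 * (H : ℂ)) + (v : ℂ) * (y : ℂ) / (2 * (W : ℂ))))

noncomputable def idft (H W : ℤ) (F : ℤ → ℤ → ℂ) (x y : ℤ) : ℂ :=
  (1 / (4 * (H : ℂ) * (W : ℂ))) *
    ∑ u ∈ Finset.Icc (-H) (H - 1), ∑ v ∈ Finset.Icc (-W) (W - 1),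
      F u v * Complex.exp ((2 * (Real.pi : ℂ) * Complex.I) *
        ((u : ℂ) * (x : ℂ) / (2 * (H : ℂ)) + (v : ℂ) * (y : ℂ) / (2 * (W : ℂ))))

noncomputable def crop (H W H' W' : ℤ) (F : ℤ → ℤ → ℂ) (u v : ℤ) : ℂ :=
  (((H' * W' : ℤ) : ℂ) / ((H * W : ℤ) : ℂ)) * F u v

noncomputable def downsample (k : ℤ) (w : ℤ → ℤ → ℂ) (X : ℤ → ℤ → ℂ) (x' y' : ℤ) : ℂ :=
  ∑ s ∈ Finset.Icc (0 : ℤ) (k - 1), ∑ t ∈ Finset.Icc (0 : ℤ) (k - 1),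
    w s t * X (k * x' + s) (k * y' + t)

noncomputable def beta (H W k : ℤ) (w : ℤ → ℤ → ℂ) (u' v' : ℤ) : ℂ :=
  ∑ s ∈ Finset.Icc (0 : ℤ) (k - 1), ∑ t ∈ Finset.Icc (0 : ℤ) (k - 1),
    w s t * Complex.exp ((2 * (Real.pi : ℂ) * Complex.I) *
      ((u' : ℂ) * (s : ℂ) / (2 * (H : ℂ)) + (v' : ℂ) * (t : ℂ) / (2 * (W : ℂ))))

noncomputable def alpha (H W k : ℤ) (w : ℤ → ℤ → ℂ) (u v u' v' : ℤ) : ℂ :=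
  if (2 * H / k ∣ u' - u) ∧ (2 * W / k ∣ v' - v) then beta H W k w u' v' / (k : ℂ) ^ 2 else 0

/-!
Both sides are linear in `X`, so it suffices to compare the coefficients of `X x y`. On the left
it is `w (x % k) (y % k)` times the coarse-grid phase of `(x / k, y / k)` at `(u, v)`. On the
right, expanding `beta` splits the `(u', v')`-sum into products of one-dimensional sums of a
`2H`-th root of unity over the residue class `u' ≡ u [ZMOD 2H/k]`. Such a sum is a geometric sum
of `k` terms: it is `k` times a single phase when `k ∣ x - s` and `0` otherwise, which singles
out the tap `s = x % k` (and likewise `t = y % k`).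
-/

open Complex

noncomputable def dftPhase (N m : ℤ) : ℂ :=
  exp (-(2 * (Real.pi : ℂ) * I) * ((m : ℂ) / (N : ℂ)))

theorem dftPhase_add (N a b : ℤ) : dftPhase N (a + b) = dftPhase N a * dftPhase N b := by
  rw [dftPhase, dftPhase, dftPhase, ← exp_add]
  push_cast
  ring_nf

theorem dftPhase_mul_right_self {N : ℤ} (hN : N ≠ 0) (c : ℤ) : dftPhase N (N * c) = 1 := by
  have hN' : (N : ℂ) ≠ 0 := by exact_mod_cast hN
  rw [dftPhase, ← exp_int_mul_two_pi_mul_I (-c)]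
  congr 1
  push_cast
  field_simp

theorem dftPhase_eq_one_iff {N : ℤ} (hN : N ≠ 0) (m : ℤ) : dftPhase N m = 1 ↔ N ∣ m := by
  refine ⟨fun h => ?_, fun ⟨c, hc⟩ => hc ▸ dftPhase_mul_right_self hN c⟩
  have hN' : (N : ℂ) ≠ 0 := by exact_mod_cast hN
  obtain ⟨n, hn⟩ := exp_eq_one_iff.mp h
  refine ⟨-n, ?_⟩
  have h2pi : (2 * (Real.pi : ℂ) * I) ≠ 0 := by simp [Real.pi_ne_zero]
  field_simp at hn
  exact_mod_cast (by push_cast; linear_combination -hn : (m : ℂ) = N * (-n : ℤ))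

theorem dftPhase_mul_mul_left {k : ℤ} (hk : k ≠ 0) (N m : ℤ) :
    dftPhase (k * N) (k * m) = dftPhase N m := by
  have hk' : (k : ℂ) ≠ 0 := by exact_mod_cast hk
  rw [dftPhase, dftPhase]
  push_cast
  rw [mul_div_mul_left _ _ hk']

theorem dft_eq_sum_dftPhase (H W : ℤ) (X : ℤ → ℤ → ℂ) (u v : ℤ) :
    dft H W X u v = ∑ x ∈ Icc (-H) (H - 1), ∑ y ∈ Icc (-W) (W - 1),
      X x y * (dftPhase (2 * H) (u * x) * dftPhase (2 * W) (v * y)) := by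
  refine sum_congr rfl fun x _ => sum_congr rfl fun y _ => ?_
  rw [dftPhase, dftPhase, ← exp_add]
  push_cast
  ring_nf

theorem beta_eq_sum_dftPhase (H W k : ℤ) (w : ℤ → ℤ → ℂ) (u v : ℤ) :
    beta H W k w u v = ∑ s ∈ Icc 0 (k - 1), ∑ t ∈ Icc 0 (k - 1),
      w s t * (dftPhase (2 * H) (-(u * s)) * dftPhase (2 * W) (-(v * t))) := by
  refine sum_congr rfl fun s _ => sum_congr rfl fun t _ => ?_
  rw [dftPhase, dftPhase, ← exp_add]
  push_cast
  ring_nf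

theorem Function.Periodic.sum_Ico_add_eq_sum_Ico_zero {M : Type*} [AddCommMonoid M] {f : ℤ → M}
    {L : ℤ} (hf : Function.Periodic f L) (hL : 0 < L) (a : ℤ) :
    ∑ x ∈ Ico a (a + L), f x = ∑ x ∈ Ico 0 L, f x := by
  have hinj : Set.InjOn (· % L) (Ico a (a + L) : Set ℤ) :=
    card_image_iff.mp (by rw [Int.image_Ico_emod a L hL.le]; simp [Int.card_Ico])
  rw [← Int.image_Ico_emod a L hL.le, sum_image hinj]
  refine sum_congr rfl fun x _ => ?_
  rw [Int.emod_def, mul_comm]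
  simpa using (hf.sub_int_mul_eq (x / L)).symm

theorem Int.sum_Ico_ite_dvd_sub {M : Type*} [AddCommMonoid M] {k : ℤ} (hk : 0 < k) (x : ℤ)
    (f : ℤ → M) : ∑ s ∈ Ico 0 k, (if k ∣ x - s then f s else 0) = f (x % k) := by
  have hdvd : ∀ s ∈ Ico 0 k, (k ∣ x - s ↔ s = x % k) := fun s hs => by
    rw [mem_Ico] at hs
    rw [← Int.modEq_iff_dvd, Int.ModEq, Int.emod_eq_of_lt hs.1 hs.2]
  rw [sum_congr rfl fun s hs => if_congr (hdvd s hs) rfl rfl, sum_ite_eq', if_pos]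
  exact mem_Ico.mpr ⟨Int.emod_nonneg x hk.ne', Int.emod_lt_of_pos x hk⟩

theorem Int.sum_Ico_mul_ediv_emod {M : Type*} [AddCommMonoid M] {k : ℤ} (hk : 0 < k) (a b : ℤ)
    (f : ℤ → ℤ → M) :
    ∑ x ∈ Ico (k * a) (k * b), f (x / k) (x % k) = ∑ q ∈ Ico a b, ∑ r ∈ Ico 0 k, f q r := by
  rw [← sum_product']
  refine sum_nbij' (fun x => (x / k, x % k)) (fun p => k * p.1 + p.2) ?_ ?_ ?_ ?_ ?_
  · intro x hx
    simp only [mem_Ico, mem_product] at hx ⊢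
    rw [Int.le_ediv_iff_mul_le hk, Int.ediv_lt_iff_lt_mul hk]
    exact ⟨⟨by linarith, by linarith⟩, Int.emod_nonneg x hk.ne', Int.emod_lt_of_pos x hk⟩
  · rintro ⟨q, r⟩ hp
    simp only [mem_Ico, mem_product] at hp ⊢
    constructor <;> nlinarith
  · intro x _
    exact Int.mul_ediv_add_emod x k
  · rintro ⟨q, r⟩ hp
    simp only [mem_Ico, mem_product] at hp
    obtain ⟨hq, hr⟩ := (Int.ediv_emod_unique hk).mpr ⟨add_comm _ _, hp.2⟩
    exact Prod.ext hq hr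
  · intro x _
    rfl

theorem sum_Ico_dftPhase_mul {N : ℤ} (hN : 0 < N) (m : ℤ) :
    ∑ c ∈ Ico 0 N, dftPhase N (c * m) = if N ∣ m then (N : ℂ) else 0 := by
  split_ifs with hm
  · obtain ⟨d, rfl⟩ := hm
    have hone : ∀ c, dftPhase N (c * (N * d)) = 1 := fun c => by
      rw [mul_left_comm, dftPhase_mul_right_self hN.ne']
    simp only [hone, sum_const, Int.card_Ico, sub_zero, nsmul_eq_mul, mul_one]
    exact_mod_cast Int.toNat_of_nonneg hN.le
  · have hperiodic : Function.Periodic (fun c => dftPhase N (c * m)) N := fun c => by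
      simp only [add_mul, dftPhase_add, dftPhase_mul_right_self hN.ne', mul_one]
    have hshift : dftPhase N m * ∑ c ∈ Ico 0 N, dftPhase N (c * m)
        = ∑ c ∈ Ico 0 N, dftPhase N (c * m) := by
      calc dftPhase N m * ∑ c ∈ Ico 0 N, dftPhase N (c * m)
          = ∑ c ∈ Ico 0 N, dftPhase N ((c + 1) * m) := by
            rw [mul_sum]
            exact sum_congr rfl fun c _ => by rw [add_mul, one_mul, dftPhase_add, mul_comm]
        _ = ∑ c ∈ Ico 1 (1 + N), dftPhase N (c * m) := by
            rw [sum_Ico_add' (fun c => dftPhase N (c * m)), zero_add, add_comm]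
        _ = _ := hperiodic.sum_Ico_add_eq_sum_Ico_zero hN 1
    exact (mul_left_eq_self₀.mp hshift).resolve_left (mt (dftPhase_eq_one_iff hN.ne' m).mp hm)

theorem sum_Ico_ite_dvd_sub_dftPhase {N k : ℤ} (hN : 0 < N) (hk : 0 < k) (a u m : ℤ) :
    ∑ u' ∈ Ico a (a + k * N), (if N ∣ u' - u then dftPhase (k * N) (u' * m) else 0)
      = if k ∣ m then k * dftPhase (k * N) (u * m) else 0 := by
  have hkN : 0 < k * N := mul_pos hk hN
  set g : ℤ → ℂ := fun u' => if N ∣ u' - u then dftPhase (k * N) (u' * m) else 0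
  have hg : Function.Periodic g (k * N) := fun u' => by
    have hdvd : N ∣ u' + k * N - u ↔ N ∣ u' - u := by
      rw [add_sub_right_comm]
      exact dvd_add_left (dvd_mul_left N k)
    simp only [g, hdvd, add_mul, dftPhase_add, dftPhase_mul_right_self hkN.ne', mul_one]
  calc ∑ u' ∈ Ico a (a + k * N), g u'
      = ∑ u' ∈ Ico u (u + k * N), g u' := by
        rw [hg.sum_Ico_add_eq_sum_Ico_zero hkN, hg.sum_Ico_add_eq_sum_Ico_zero hkN]
    _ = ∑ x ∈ Ico 0 (k * N), if N ∣ x then dftPhase (k * N) ((x + u) * m) else 0 := by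
        have hshift := sum_Ico_add' g 0 (k * N) u
        rw [zero_add, add_comm (k * N)] at hshift
        simp only [← hshift, g, add_sub_cancel_right]
    _ = ∑ c ∈ Ico 0 k, dftPhase (k * N) ((c * N + u) * m) := by
        rw [← sum_filter, Int.Ico_filter_dvd_eq _ _ hN, sum_map]
        have hN' : (N : ℚ) ≠ 0 := by exact_mod_cast hN.ne'
        simp [hN']
    _ = dftPhase (k * N) (u * m) * ∑ c ∈ Ico 0 k, dftPhase k (c * m) := by
        rw [mul_sum]
        refine sum_congr rfl fun c _ => ?_
        rw [show (c * N + u) * m = u * m + N * (c * m) by ring, dftPhase_add, mul_comm k N,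
          dftPhase_mul_mul_left hN.ne']
    _ = _ := by
        rw [sum_Ico_dftPhase_mul hk]
        split_ifs <;> ring

theorem Finset.sum_sum_sum_sum_comm {α β γ δ M : Type*} [AddCommMonoid M] (s : Finset α)
    (t : Finset β) (u : Finset γ) (v : Finset δ) (f : α → β → γ → δ → M) :
    ∑ a ∈ s, ∑ b ∈ t, ∑ c ∈ u, ∑ d ∈ v, f a b c d
      = ∑ c ∈ u, ∑ d ∈ v, ∑ a ∈ s, ∑ b ∈ t, f a b c d := by
  simp only [← sum_product' s t, ← sum_product' u v]
  exact sum_comm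

theorem sum_sum_mul_dft (H W : ℤ) (c : ℤ → ℤ → ℂ) (X : ℤ → ℤ → ℂ) :
    ∑ u' ∈ Icc (-H) (H - 1), ∑ v' ∈ Icc (-W) (W - 1), c u' v' * dft H W X u' v'
      = ∑ x ∈ Icc (-H) (H - 1), ∑ y ∈ Icc (-W) (W - 1), X x y *
          ∑ u' ∈ Icc (-H) (H - 1), ∑ v' ∈ Icc (-W) (W - 1),
            c u' v' * (dftPhase (2 * H) (u' * x) * dftPhase (2 * W) (v' * y)) := by
  simp only [dft_eq_sum_dftPhase, mul_sum]
  rw [sum_sum_sum_sum_comm]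
  refine sum_congr rfl fun x _ => sum_congr rfl fun y _ =>
    sum_congr rfl fun u' _ => sum_congr rfl fun v' _ => by ring

theorem dft_downsample {k : ℤ} (hk : 0 < k) (H' W' : ℤ) (w X : ℤ → ℤ → ℂ) (u v : ℤ) :
    dft H' W' (downsample k w X) u v
      = ∑ x ∈ Icc (-(k * H')) (k * H' - 1), ∑ y ∈ Icc (-(k * W')) (k * W' - 1), X x y *
          (w (x % k) (y % k) *
            (dftPhase (2 * H') (u * (x / k)) * dftPhase (2 * W') (v * (y / k)))) := by
  simp only [dft_eq_sum_dftPhase, downsample, Icc_sub_one_right_eq_Ico, ← mul_neg]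
  calc _ = ∑ x' ∈ Ico (-H') H', ∑ s ∈ Ico 0 k, ∑ y' ∈ Ico (-W') W', ∑ t ∈ Ico 0 k,
          w s t * X (k * x' + s) (k * y' + t) *
            (dftPhase (2 * H') (u * x') * dftPhase (2 * W') (v * y')) := by
        simp only [sum_mul]
        exact sum_congr rfl fun x' _ => sum_comm
    _ = _ := by
        simp only [← Int.sum_Ico_mul_ediv_emod (M := ℂ) hk, Int.mul_ediv_add_emod]
        refine sum_congr rfl fun x _ => sum_congr rfl fun y _ => by ring

theorem sum_Icc_ite_dvd_sub_dftPhase {k n : ℤ} (hk : 0 < k) (hn : 0 < n) (p z : ℤ) :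
    ∑ p' ∈ Icc (-(k * n)) (k * n - 1),
      (if 2 * n ∣ p' - p then dftPhase (2 * (k * n)) (p' * z) else 0)
      = if k ∣ z then k * dftPhase (2 * n) (p * (z / k)) else 0 := by
  have hbox : Icc (-(k * n)) (k * n - 1) = Ico (-(k * n)) (-(k * n) + k * (2 * n)) := by
    rw [Icc_sub_one_right_eq_Ico]
    congr 1
    ring
  rw [hbox, mul_left_comm 2 k n, sum_Ico_ite_dvd_sub_dftPhase (by positivity) hk]
  split_ifs with hz
  · obtain ⟨d, rfl⟩ := hz
    rw [mul_left_comm p, dftPhase_mul_mul_left hk.ne', Int.mul_ediv_cancel_left _ hk.ne']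
  · rfl

theorem alpha_mul_dftPhase {k : ℤ} (hk : 0 < k) (H' W' : ℤ) (w : ℤ → ℤ → ℂ) (u v u' v' x y : ℤ) :
    alpha (k * H') (k * W') k w u v u' v' *
        (dftPhase (2 * (k * H')) (u' * x) * dftPhase (2 * (k * W')) (v' * y))
      = (k : ℂ)⁻¹ ^ 2 * ∑ s ∈ Ico 0 k, ∑ t ∈ Ico 0 k, w s t *
          ((if 2 * H' ∣ u' - u then dftPhase (2 * (k * H')) (u' * (x - s)) else 0) *
           (if 2 * W' ∣ v' - v then dftPhase (2 * (k * W')) (v' * (y - t)) else 0)) := by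
  have hhalf : ∀ n : ℤ, 2 * (k * n) / k = 2 * n := fun n => by
    rw [mul_left_comm, Int.mul_ediv_cancel_left _ hk.ne']
  have hphase : ∀ N a b c : ℤ,
      dftPhase N (-(a * b)) * dftPhase N (a * c) = dftPhase N (a * (c - b)) :=
    fun N a b c => by rw [← dftPhase_add]; ring_nf
  rw [alpha, hhalf, hhalf]
  by_cases hu : 2 * H' ∣ u' - u
  · by_cases hv : 2 * W' ∣ v' - v
    · simp only [hu, hv, and_self, if_true, beta_eq_sum_dftPhase, Icc_sub_one_right_eq_Ico,
        div_eq_mul_inv, sum_mul, mul_sum]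
      refine sum_congr rfl fun s _ => sum_congr rfl fun t _ => ?_
      rw [← hphase _ u' s x, ← hphase _ v' t y]
      ring
    · simp [hv]
  · simp [hu]

theorem sum_alpha_mul_dftPhase {k H' W' : ℤ} (hk : 0 < k) (hH' : 0 < H') (hW' : 0 < W')
    (w : ℤ → ℤ → ℂ) (u v x y : ℤ) :
    ∑ u' ∈ Icc (-(k * H')) (k * H' - 1), ∑ v' ∈ Icc (-(k * W')) (k * W' - 1),
      alpha (k * H') (k * W') k w u v u' v' *
        (dftPhase (2 * (k * H')) (u' * x) * dftPhase (2 * (k * W')) (v' * y))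
      = w (x % k) (y % k) *
          (dftPhase (2 * H') (u * (x / k)) * dftPhase (2 * W') (v * (y / k))) := by
  have hquot : ∀ z : ℤ, (z - z % k) / k = z / k := fun z => by
    rw [Int.emod_def, sub_sub_cancel, Int.mul_ediv_cancel_left _ hk.ne']
  calc _ = (k : ℂ)⁻¹ ^ 2 * ∑ s ∈ Ico 0 k, ∑ t ∈ Ico 0 k, w s t *
          ((∑ u' ∈ Icc (-(k * H')) (k * H' - 1),
              if 2 * H' ∣ u' - u then dftPhase (2 * (k * H')) (u' * (x - s)) else 0) *
           (∑ v' ∈ Icc (-(k * W')) (k * W' - 1),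
              if 2 * W' ∣ v' - v then dftPhase (2 * (k * W')) (v' * (y - t)) else 0)) := by
        simp only [sum_mul_sum]
        simp only [alpha_mul_dftPhase hk, mul_sum]
        rw [sum_sum_sum_sum_comm]
    _ = (k : ℂ)⁻¹ ^ 2 * (w (x % k) (y % k) * ((k * dftPhase (2 * H') (u * (x / k))) *
          (k * dftPhase (2 * W') (v * (y / k))))) := by
        simp only [sum_Icc_ite_dvd_sub_dftPhase hk hH', sum_Icc_ite_dvd_sub_dftPhase hk hW',
          mul_ite, ite_mul, mul_zero, zero_mul, Int.sum_Ico_ite_dvd_sub hk, hquot]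
    _ = _ := by
        have hkC : (k : ℂ) ≠ 0 := by exact_mod_cast hk.ne'
        field_simp

theorem downsample_alpha_support (H W k : ℤ) (hk : 0 < k) (hH : 0 < H) (hW : 0 < W)
    (hkH : k ∣ H) (hkW : k ∣ W) (w : ℤ → ℤ → ℂ) :
    ∀ (X : ℤ → ℤ → ℂ) (u v : ℤ),
      dft (H / k) (W / k) (downsample k w X) u v
        = ∑ u' ∈ Finset.Icc (-H) (H - 1), ∑ v' ∈ Finset.Icc (-W) (W - 1),
            alpha H W k w u v u' v' * dft H W X u' v' := by
  intro X u v
  obtain ⟨H', rfl⟩ := hkH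
  obtain ⟨W', rfl⟩ := hkW
  have hH' : 0 < H' := pos_of_mul_pos_right hH hk.le
  have hW' : 0 < W' := pos_of_mul_pos_right hW hk.le
  rw [Int.mul_ediv_cancel_left _ hk.ne', Int.mul_ediv_cancel_left _ hk.ne', dft_downsample hk,
    sum_sum_mul_dft]
  exact sum_congr rfl fun x _ => sum_congr rfl fun y _ => by
    rw [sum_alpha_mul_dftPhase hk hH' hW']
end

section
/- The zero-frequency row of a down-sampled image has nonzero dependency on high-frequency components of the original: with average-pooling weights w_{s,t} = 1/k² and k ≥ 2, the coefficient α(u, 0, u', 0) relating F(X_d)[u,0] to F(X)[u',0] is nonzero whenever u' - u = a·(2H/k) for an integer a with u' in range {-H,...,H-1} and β(u',0) ≠ 0; in particular α(0,0,u',0) = β(u',0)/k² where β(u',0) = (1/k)Σ_{s=0}^{k-1} exp(j2π u's/(2H)), which is nonzero for u' not a nonzero multiple of 2H/k. -/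
open Finset

lemma two_pi_I_ne : (2 * (Real.pi:ℂ) * Complex.I) ≠ 0 := by
  simp [Real.pi_ne_zero, Complex.I_ne_zero, Complex.ofReal_ne_zero]

lemma exp_ratio (a d : ℤ) (hd : d ≠ 0) :
    Complex.exp ((2 * (Real.pi:ℂ) * Complex.I) * ((a:ℂ)/(d:ℂ))) = 1 ↔ d ∣ a := by
  rw [Complex.exp_eq_one_iff]
  have hdC : (d:ℂ) ≠ 0 := Int.cast_ne_zero.mpr hd
  constructor
  · rintro ⟨n, hn⟩
    rw [show ((n:ℂ)) * (2 * (Real.pi:ℝ) * Complex.I) = (2 * (Real.pi:ℂ) * Complex.I) * n by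
      push_cast; ring] at hn
    have h1 : (a:ℂ)/(d:ℂ) = (n:ℂ) := mul_left_cancel₀ two_pi_I_ne hn
    refine ⟨n, ?_⟩
    have h2 : (a:ℂ) = (d:ℂ) * (n:ℂ) := by
      field_simp at h1; linear_combination h1
    exact_mod_cast h2
  · rintro ⟨c, hc⟩
    refine ⟨c, ?_⟩
    subst hc
    push_cast
    field_simp

lemma Icc_int_sum (k : ℤ) (f : ℤ → ℂ) :
    ∑ s ∈ Finset.Icc (0:ℤ) (k-1), f s = ∑ i ∈ Finset.range k.toNat, f i := by
  rcases le_or_gt k 0 with h | h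
  · rw [Finset.Icc_eq_empty (by omega), Int.toNat_of_nonpos h]; simp
  · refine Finset.sum_nbij' (fun s => s.toNat) (fun i => (i:ℤ)) ?_ ?_ ?_ ?_ ?_ <;>
      intros a ha <;> simp only [Finset.mem_Icc, Finset.mem_range] at *
    · omega
    · omega
    · omega
    · simp
    · congr 1; omega

lemma geom_part (H k : ℤ) (hk : 2 ≤ k) (hH : 0 < H) (hkH : k ∣ H) (u' : ℤ)
    (h : u' = 0 ∨ ¬ (2 * H / k) ∣ u') :
    ∑ s ∈ Finset.Icc (0:ℤ) (k-1),
      Complex.exp ((2 * (Real.pi : ℂ) * Complex.I) * ((u' : ℂ) * (s : ℂ) / (2 * (H : ℂ)))) ≠ 0 := by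
  obtain ⟨m, hm⟩ := hkH
  have hm0 : 0 < m := by nlinarith
  set q : ℂ := Complex.exp ((2 * (Real.pi : ℂ) * Complex.I) * ((u' : ℂ) / (2 * (H : ℂ)))) with hq
  have hcast : ((2 * H : ℤ) : ℂ) = 2 * (H : ℂ) := by push_cast; ring
  have hq1 : q = 1 ↔ (2 * H) ∣ u' := by
    rw [hq, ← hcast]; exact exp_ratio u' (2 * H) (by omega)
  have hterm : ∀ s ∈ Finset.Icc (0:ℤ) (k-1),
      Complex.exp ((2 * (Real.pi : ℂ) * Complex.I) * ((u' : ℂ) * (s : ℂ) / (2 * (H : ℂ))))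
        = q ^ s.toNat := by
    intro s hs
    simp only [Finset.mem_Icc] at hs
    rw [hq, ← Complex.exp_nat_mul]
    congr 1
    have hsc : ((s.toNat : ℂ)) = (s : ℂ) := by norm_cast; omega
    rw [hsc]; ring
  rw [Finset.sum_congr rfl hterm, Icc_int_sum k (fun s => q ^ s.toNat)]
  have hsimp : ∀ i ∈ Finset.range k.toNat, q ^ ((i:ℤ)).toNat = q ^ i := by
    intro i _; congr 1
  rw [Finset.sum_congr rfl hsimp]
  have hdiv : 2 * H / k = 2 * m := by
    rw [hm, show 2 * (k * m) = k * (2 * m) by ring, Int.mul_ediv_cancel_left _ (by omega)]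
  have hqK : q ^ k.toNat = 1 ↔ (2 * m) ∣ u' := by
    rw [hq, ← Complex.exp_nat_mul]
    have : (k.toNat : ℂ) * ((2 * (Real.pi : ℂ) * Complex.I) * ((u' : ℂ) / (2 * (H : ℂ))))
        = (2 * (Real.pi : ℂ) * Complex.I) * (((u' * k : ℤ) : ℂ) / ((2 * H : ℤ) : ℂ)) := by
      push_cast
      rw [show ((k.toNat : ℂ)) = (k : ℂ) by norm_cast; omega]
      ring
    rw [this, exp_ratio _ _ (by omega)]
    constructor
    · rintro ⟨c, hc⟩
      refine ⟨c, ?_⟩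
      have hk0 : k ≠ 0 := by omega
      have : u' * k = (2 * m * c) * k := by rw [hm] at hc; linarith [hc]
      exact mul_right_cancel₀ hk0 this
    · rintro ⟨c, hc⟩
      exact ⟨c, by rw [hc, hm]; ring⟩
  rcases h with h | h
  · subst h
    have : q = 1 := hq1.mpr (dvd_zero _)
    rw [this]
    simp only [one_pow, Finset.sum_const, Finset.card_range, nsmul_eq_mul, mul_one]
    exact_mod_cast (by omega : k.toNat ≠ 0)
  · rw [hdiv] at h
    have hqne : q ≠ 1 := fun hq1' => h (dvd_trans ⟨k, by rw [hm]; ring⟩ (hq1.mp hq1'))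
    rw [geom_sum_eq hqne]
    exact div_ne_zero (sub_ne_zero.mpr (fun e => h (hqK.mp e))) (sub_ne_zero.mpr hqne)

lemma beta_eq0 (H W k : ℤ) (hk : 2 ≤ k) (u' : ℤ) :
    beta H W k (fun _ _ => 1 / (k : ℂ) ^ 2) u' 0
      = (1 / (k : ℂ)) * ∑ s ∈ Finset.Icc (0 : ℤ) (k - 1),
          Complex.exp ((2 * (Real.pi : ℂ) * Complex.I) * ((u' : ℂ) * (s : ℂ) / (2 * (H : ℂ)))) := by
  have hkC : (k : ℂ) ≠ 0 := Int.cast_ne_zero.mpr (by omega)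
  have hkc : ((k.toNat : ℂ)) = (k : ℂ) := by norm_cast; omega
  unfold beta
  simp only [Int.cast_zero, zero_mul, zero_div, add_zero]
  rw [Finset.mul_sum]
  refine Finset.sum_congr rfl (fun s _ => ?_)
  rw [Finset.sum_const, Int.card_Icc, show (k - 1 + 1 - 0).toNat = k.toNat by omega,
    nsmul_eq_mul, hkc]
  field_simp

theorem downsample_high_freq_dependency (H W k : ℤ) (hk : 2 ≤ k) (hH : 0 < H) (hW : 0 < W)
    (hkH : k ∣ H) (hkW : k ∣ W) :
    (∀ u u' a : ℤ, u' - u = a * (2 * H / k) → u' ∈ Finset.Icc (-H) (H - 1) →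
        beta H W k (fun _ _ => 1 / (k : ℂ) ^ 2) u' 0 ≠ 0 →
        alpha H W k (fun _ _ => 1 / (k : ℂ) ^ 2) u 0 u' 0 ≠ 0)
    ∧ (∀ u' : ℤ, (2 * H / k) ∣ u' →
        alpha H W k (fun _ _ => 1 / (k : ℂ) ^ 2) 0 0 u' 0
          = beta H W k (fun _ _ => 1 / (k : ℂ) ^ 2) u' 0 / (k : ℂ) ^ 2)
    ∧ (∀ u' : ℤ,
        beta H W k (fun _ _ => 1 / (k : ℂ) ^ 2) u' 0
          = (1 / (k : ℂ)) * ∑ s ∈ Finset.Icc (0 : ℤ) (k - 1),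
              Complex.exp ((2 * (Real.pi : ℂ) * Complex.I) *
                ((u' : ℂ) * (s : ℂ) / (2 * (H : ℂ)))))
    ∧ (∀ u' : ℤ, (u' = 0 ∨ ¬ (2 * H / k) ∣ u') →
        beta H W k (fun _ _ => 1 / (k : ℂ) ^ 2) u' 0 ≠ 0) := by
  have hkC : (k : ℂ) ≠ 0 := Int.cast_ne_zero.mpr (by omega)
  refine ⟨?_, ?_, ?_, ?_⟩
  · intro u u' a hdiff _ hb
    unfold alpha
    rw [if_pos ⟨⟨a, by rw [hdiff]; ring⟩, by simp⟩]
    exact div_ne_zero hb (pow_ne_zero 2 hkC)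
  · intro u' hd
    unfold alpha
    rw [if_pos ⟨by simpa using hd, by simp⟩]
  · exact fun u' => beta_eq0 H W k hk u'
  · intro u' h
    rw [beta_eq0 H W k hk]
    exact mul_ne_zero (one_div_ne_zero hkC) (geom_part H k hk hH hkH u' h)
end

section
/- Down-sampling by an integer factor k commutes with the described spectral folding: for average pooling (w_{s,t}=1/k²), F(X_d)[u,v] is a weighted sum over exactly the k² aliases (u', v') with u' ≡ u (mod 2H/k) and v' ≡ v (mod 2W/k) in {-H,...,H-1}×{-W,...,W-1}, with weights β(u',v')/k², i.e. F(X_d)[u,v] = (1/k²)·Σ_{(u',v')} β(u',v')·F(X)[u',v'] over these aliases. -/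
open Finset

lemma sum_Icc_int_eq_range (k : ℤ) (hk : 0 ≤ k) (f : ℤ → ℂ) :
    ∑ a ∈ Finset.Icc (0:ℤ) (k-1), f a = ∑ n ∈ Finset.range k.toNat, f n := by
  refine Finset.sum_nbij' (i := fun a => a.toNat) (j := fun n => (n:ℤ)) ?_ ?_ ?_ ?_ ?_
  · intro a ha; simp only [Finset.mem_Icc] at ha; simp only [Finset.mem_range]
    show a.toNat < k.toNat; omega
  · intro n hn; simp only [Finset.mem_range] at hn; simp only [Finset.mem_Icc]
    constructor <;> [positivity; omega]
  · intro a ha; simp only [Finset.mem_Icc] at ha; show ((a.toNat : ℤ)) = a; omega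
  · intro n _; show ((n:ℤ)).toNat = n; omega
  · intro a ha; simp only [Finset.mem_Icc] at ha
    show f a = f ((a.toNat : ℤ)); congr 1; omega

lemma sum_exp_unit (k m : ℤ) (hk : 0 < k) :
    ∑ a ∈ Finset.Icc (0:ℤ) (k-1),
      Complex.exp (2 * (Real.pi:ℂ) * Complex.I * ((a:ℂ) * (m:ℂ) / (k:ℂ)))
    = if (k:ℤ) ∣ m then (k:ℂ) else 0 := by
  have hk0 : (k:ℂ) ≠ 0 := by exact_mod_cast hk.ne'
  rw [sum_Icc_int_eq_range k hk.le]
  have hterm : ∀ n : ℕ, Complex.exp (2 * (Real.pi:ℂ) * Complex.I * (((n:ℤ):ℂ) * (m:ℂ) / (k:ℂ)))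
      = Complex.exp (2 * (Real.pi:ℂ) * Complex.I * ((m:ℂ) / (k:ℂ))) ^ n := by
    intro n; rw [← Complex.exp_nat_mul]; congr 1; push_cast; ring
  rw [Finset.sum_congr rfl (fun n _ => hterm n)]
  set ζ := Complex.exp (2 * (Real.pi:ℂ) * Complex.I * ((m:ℂ) / (k:ℂ))) with hζ
  by_cases hdvd : k ∣ m
  · obtain ⟨c, rfl⟩ := hdvd
    have h1 : ζ = 1 := by
      rw [hζ, show (2 * (Real.pi:ℂ) * Complex.I * (((k*c:ℤ):ℂ) / (k:ℂ))) = ((c:ℤ):ℂ) * (2 * (Real.pi:ℂ) * Complex.I) by push_cast; field_simp]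
      exact Complex.exp_int_mul_two_pi_mul_I c
    simp only [h1, one_pow, Finset.sum_const, Finset.card_range, nsmul_eq_mul, mul_one]
    rw [if_pos ⟨c, rfl⟩]
    exact_mod_cast congrArg (fun n : ℤ => (n:ℂ)) (Int.toNat_of_nonneg hk.le)
  · have hζk : ζ ^ k.toNat = 1 := by
      rw [hζ, ← Complex.exp_nat_mul]
      rw [show ((k.toNat : ℂ) * (2 * (Real.pi:ℂ) * Complex.I * ((m:ℂ) / (k:ℂ)))) = (m:ℂ) * (2 * (Real.pi:ℂ) * Complex.I) by
        have : ((k.toNat : ℤ) : ℂ) = (k:ℂ) := by exact_mod_cast congrArg (fun n : ℤ => (n:ℂ)) (Int.toNat_of_nonneg hk.le)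
        push_cast at this ⊢; rw [this]; field_simp]
      exact Complex.exp_int_mul_two_pi_mul_I m
    have hζ1 : ζ ≠ 1 := by
      intro h
      rw [hζ, Complex.exp_eq_one_iff] at h
      obtain ⟨n, hn⟩ := h
      apply hdvd
      have h2πI : (2 * (Real.pi:ℂ) * Complex.I) ≠ 0 := by
        simp [Real.pi_ne_zero, Complex.I_ne_zero]
      have hm : (m:ℂ) = (n:ℂ) * (k:ℂ) := by
        field_simp at hn
        have := mul_left_cancel₀ h2πI (by linear_combination (2 * (Real.pi:ℂ) * Complex.I) * hn : (2 * (Real.pi:ℂ) * Complex.I) * (m:ℂ) = (2 * (Real.pi:ℂ) * Complex.I) * ((n:ℂ)*(k:ℂ)))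
        exact this
      exact ⟨n, by exact_mod_cast (by rw [hm]; ring : (m:ℂ) = (k:ℂ) * (n:ℂ))⟩
    rw [geom_sum_eq hζ1, hζk, if_neg hdvd]
    simp

lemma alias1 (H' k : ℤ) (hk : 0 < k) (hH' : 0 < H') (u x : ℤ) :
    ∑ a ∈ Finset.Icc (0:ℤ) (k-1),
      (∑ s ∈ Finset.Icc (0:ℤ) (k-1),
        Complex.exp ((2*(Real.pi:ℂ)*Complex.I) * (((u + a*(2*H') : ℤ):ℂ) * (s:ℂ) / (2*((k*H' : ℤ):ℂ)))))
      * Complex.exp (-(2*(Real.pi:ℂ)*Complex.I) * (((u + a*(2*H') : ℤ):ℂ) * (x:ℂ) / (2*((k*H':ℤ):ℂ))))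
    = (k:ℂ) * Complex.exp (-(2*(Real.pi:ℂ)*Complex.I) * ((u:ℂ) * ((x/k : ℤ):ℂ) / (2*(H':ℂ)))) := by
  have hkc : (k:ℂ) ≠ 0 := by exact_mod_cast hk.ne'
  have hHc : (H':ℂ) ≠ 0 := by exact_mod_cast hH'.ne'
  have step1 : ∀ a ∈ Finset.Icc (0:ℤ) (k-1),
      (∑ s ∈ Finset.Icc (0:ℤ) (k-1),
        Complex.exp ((2*(Real.pi:ℂ)*Complex.I) * (((u + a*(2*H') : ℤ):ℂ) * (s:ℂ) / (2*((k*H' : ℤ):ℂ)))))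
      * Complex.exp (-(2*(Real.pi:ℂ)*Complex.I) * (((u + a*(2*H') : ℤ):ℂ) * (x:ℂ) / (2*((k*H':ℤ):ℂ))))
      = ∑ s ∈ Finset.Icc (0:ℤ) (k-1),
          Complex.exp ((2*(Real.pi:ℂ)*Complex.I) * ((u:ℂ) * ((s:ℂ)-(x:ℂ)) / (2*(k:ℂ)*(H':ℂ))))
          * Complex.exp ((2*(Real.pi:ℂ)*Complex.I) * ((a:ℂ) * (((s - x : ℤ)):ℂ) / (k:ℂ))) := by
    intro a _
    rw [Finset.sum_mul]
    refine Finset.sum_congr rfl fun s _ => ?_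
    rw [← Complex.exp_add, ← Complex.exp_add]
    congr 1
    push_cast
    field_simp
    ring
  rw [Finset.sum_congr rfl step1, Finset.sum_comm]
  have step2 : ∀ s ∈ Finset.Icc (0:ℤ) (k-1),
      ∑ a ∈ Finset.Icc (0:ℤ) (k-1),
        Complex.exp ((2*(Real.pi:ℂ)*Complex.I) * ((u:ℂ) * ((s:ℂ)-(x:ℂ)) / (2*(k:ℂ)*(H':ℂ))))
        * Complex.exp ((2*(Real.pi:ℂ)*Complex.I) * ((a:ℂ) * (((s - x : ℤ)):ℂ) / (k:ℂ)))
      = Complex.exp ((2*(Real.pi:ℂ)*Complex.I) * ((u:ℂ) * ((s:ℂ)-(x:ℂ)) / (2*(k:ℂ)*(H':ℂ))))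
        * (if k ∣ (s - x) then (k:ℂ) else 0) := by
    intro s _
    rw [← Finset.mul_sum, sum_exp_unit k (s-x) hk]
  rw [Finset.sum_congr rfl step2]
  rw [Finset.sum_eq_single_of_mem (x % k)
    (by simp only [Finset.mem_Icc]; exact ⟨Int.emod_nonneg x hk.ne', by have := Int.emod_lt_of_pos x hk; omega⟩)]
  · rw [if_pos (by exact ⟨-(x/k), by have := Int.mul_ediv_add_emod x k; linarith⟩)]
    rw [mul_comm]
    congr 1
    have hxm : ((x % k : ℤ):ℂ) - (x:ℂ) = -((k:ℂ) * ((x/k : ℤ):ℂ)) := by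
      have h := Int.mul_ediv_add_emod x k
      have : ((x % k : ℤ):ℂ) = (x:ℂ) - (k:ℂ) * ((x/k : ℤ):ℂ) := by
        have : (x % k : ℤ) = x - k * (x/k) := by omega
        exact_mod_cast congrArg (fun n : ℤ => (n:ℂ)) this
      rw [this]; ring
    rw [hxm]
    congr 1
    field_simp
  · intro s hs hne
    simp only [Finset.mem_Icc] at hs
    rw [if_neg, mul_zero]
    intro hdvd
    apply hne
    have h1 : (s - x) % k = 0 := Int.emod_eq_zero_of_dvd hdvd
    have h2 : s % k = x % k := Int.emod_eq_emod_iff_emod_sub_eq_zero.mpr h1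
    have h4 : s % k = s := Int.emod_eq_of_lt hs.1 (by omega)
    omega

lemma reindex_pair (H' k : ℤ) (hk : 0 < k) (F : ℤ → ℤ → ℂ) :
    ∑ x' ∈ Finset.Icc (-H') (H'-1), ∑ s ∈ Finset.Icc (0:ℤ) (k-1), F (k*x'+s) x'
    = ∑ x ∈ Finset.Icc (-(k*H')) (k*H'-1), F x (x/k) := by
  rw [← Finset.sum_product']
  refine Finset.sum_nbij' (i := fun p => k*p.1+p.2) (j := fun x => (x/k, x%k)) ?_ ?_ ?_ ?_ ?_
  · intro p hp
    simp only [Finset.mem_product, Finset.mem_Icc] at hp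
    simp only [Finset.mem_Icc]
    constructor
    · nlinarith [hp.1.1, hp.2.1]
    · nlinarith [hp.1.2, hp.2.2]
  · intro x hx
    simp only [Finset.mem_Icc] at hx
    simp only [Finset.mem_product, Finset.mem_Icc]
    have hlo : -H' ≤ x / k := by
      have := Int.ediv_le_ediv hk (hx.1 : -(k*H') ≤ x)
      rwa [show -(k*H') = k * (-H') by ring, Int.mul_ediv_cancel_left _ hk.ne'] at this
    have hq : (k*H'-1)/k = H'-1 := by
      rw [show k*H'-1 = (k-1) + k*(H'-1) by ring, Int.add_mul_ediv_left _ _ hk.ne',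
        Int.ediv_eq_zero_of_lt (by omega) (by omega), zero_add]
    have hhi : x / k ≤ H' - 1 := (Int.ediv_le_ediv hk (hx.2 : x ≤ k*H'-1)).trans_eq hq
    exact ⟨⟨hlo, hhi⟩, ⟨Int.emod_nonneg x hk.ne', by have := Int.emod_lt_of_pos x hk; omega⟩⟩
  · intro p hp
    simp only [Finset.mem_product, Finset.mem_Icc] at hp
    have hdiv : (k*p.1+p.2)/k = p.1 := by
      rw [add_comm, Int.add_mul_ediv_left _ _ hk.ne',
        Int.ediv_eq_zero_of_lt hp.2.1 (by omega), zero_add]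
    have hmod : (k*p.1+p.2)%k = p.2 := by
      rw [add_comm, Int.add_mul_emod_self_left]
      exact Int.emod_eq_of_lt hp.2.1 (by omega)
    exact Prod.ext hdiv hmod
  · intro x _
    exact Int.mul_ediv_add_emod x k
  · intro p hp
    simp only [Finset.mem_product, Finset.mem_Icc] at hp
    have hdiv : (k*p.1+p.2)/k = p.1 := by
      rw [add_comm, Int.add_mul_ediv_left _ _ hk.ne',
        Int.ediv_eq_zero_of_lt hp.2.1 (by omega), zero_add]
    rw [hdiv]

lemma swap_factor (A B S T : Finset ℤ) (g : ℤ → ℤ → ℂ) (C D : ℤ → ℂ) (e f : ℤ → ℤ → ℂ) :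
    ∑ a ∈ A, ∑ b ∈ B, (C a * D b) * ∑ x ∈ S, ∑ y ∈ T, g x y * (e a x * f b y)
    = ∑ x ∈ S, ∑ y ∈ T, g x y * ((∑ a ∈ A, C a * e a x) * (∑ b ∈ B, D b * f b y)) := by
  calc ∑ a ∈ A, ∑ b ∈ B, (C a * D b) * ∑ x ∈ S, ∑ y ∈ T, g x y * (e a x * f b y)
      = ∑ a ∈ A, ∑ b ∈ B, ∑ x ∈ S, ∑ y ∈ T, (C a * D b) * (g x y * (e a x * f b y)) := by
        refine Finset.sum_congr rfl fun a _ => Finset.sum_congr rfl fun b _ => ?_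
        rw [Finset.mul_sum]
        exact Finset.sum_congr rfl fun x _ => Finset.mul_sum _ _ _
    _ = ∑ x ∈ S, ∑ y ∈ T, ∑ a ∈ A, ∑ b ∈ B, (C a * D b) * (g x y * (e a x * f b y)) := by
        calc ∑ a ∈ A, ∑ b ∈ B, ∑ x ∈ S, ∑ y ∈ T, (C a * D b) * (g x y * (e a x * f b y))
            = ∑ a ∈ A, ∑ x ∈ S, ∑ b ∈ B, ∑ y ∈ T, (C a * D b) * (g x y * (e a x * f b y)) :=
              Finset.sum_congr rfl fun a _ => Finset.sum_comm
          _ = ∑ x ∈ S, ∑ a ∈ A, ∑ b ∈ B, ∑ y ∈ T, (C a * D b) * (g x y * (e a x * f b y)) :=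
              Finset.sum_comm
          _ = ∑ x ∈ S, ∑ a ∈ A, ∑ y ∈ T, ∑ b ∈ B, (C a * D b) * (g x y * (e a x * f b y)) :=
              Finset.sum_congr rfl fun x _ => Finset.sum_congr rfl fun a _ => Finset.sum_comm
          _ = ∑ x ∈ S, ∑ y ∈ T, ∑ a ∈ A, ∑ b ∈ B, (C a * D b) * (g x y * (e a x * f b y)) :=
              Finset.sum_congr rfl fun x _ => Finset.sum_comm
    _ = ∑ x ∈ S, ∑ y ∈ T, g x y * ((∑ a ∈ A, C a * e a x) * (∑ b ∈ B, D b * f b y)) := by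
        refine Finset.sum_congr rfl fun x _ => Finset.sum_congr rfl fun y _ => ?_
        rw [Finset.sum_mul_sum, Finset.mul_sum]
        refine Finset.sum_congr rfl fun a _ => ?_
        rw [Finset.mul_sum]
        exact Finset.sum_congr rfl fun b _ => by ring

theorem downsample_aliasing (H W k : ℤ) (hk : 0 < k) (hH : 0 < H) (hW : 0 < W)
    (hkH : k ∣ H) (hkW : k ∣ W) (X : ℤ → ℤ → ℂ) (u v : ℤ) :
    dft (H / k) (W / k) (downsample k (fun _ _ => 1 / (k : ℂ) ^ 2) X) u v
      = ∑ a ∈ Finset.Icc (0 : ℤ) (k - 1), ∑ b ∈ Finset.Icc (0 : ℤ) (k - 1),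
          (beta H W k (fun _ _ => 1 / (k : ℂ) ^ 2)
              (u + a * (2 * H / k)) (v + b * (2 * W / k)) / (k : ℂ) ^ 2)
            * dft H W X (u + a * (2 * H / k)) (v + b * (2 * W / k)) := by
  obtain ⟨H', rfl⟩ := hkH
  obtain ⟨W', rfl⟩ := hkW
  have hH' : 0 < H' := by nlinarith
  have hW' : 0 < W' := by nlinarith
  have hkc : (k:ℂ) ≠ 0 := by exact_mod_cast hk.ne'
  have e1 : k * H' / k = H' := Int.mul_ediv_cancel_left _ hk.ne'
  have e2 : 2 * (k * H') / k = 2 * H' := by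
    rw [show 2*(k*H') = k*(2*H') by ring]; exact Int.mul_ediv_cancel_left _ hk.ne'
  have e3 : k * W' / k = W' := Int.mul_ediv_cancel_left _ hk.ne'
  have e4 : 2 * (k * W') / k = 2 * W' := by
    rw [show 2*(k*W') = k*(2*W') by ring]; exact Int.mul_ediv_cancel_left _ hk.ne'
  simp only [dft, downsample, beta, e1, e2, e3, e4]
  trans (∑ x ∈ Finset.Icc (-(k*H')) (k*H'-1), ∑ y ∈ Finset.Icc (-(k*W')) (k*W'-1),
      X x y * (1/(k:ℂ)^2 * (Complex.exp (-(2 * (Real.pi : ℂ) * Complex.I) * ((u:ℂ) * ((x/k : ℤ):ℂ) / (2*(H':ℂ)))) * Complex.exp (-(2 * (Real.pi : ℂ) * Complex.I) * ((v:ℂ) * ((y/k : ℤ):ℂ) / (2*(W':ℂ)))))))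
  · -- LHS = M
    calc ∑ x' ∈ Finset.Icc (-H') (H'-1), ∑ y' ∈ Finset.Icc (-W') (W'-1),
          (∑ s ∈ Finset.Icc (0:ℤ) (k-1), ∑ t ∈ Finset.Icc (0:ℤ) (k-1), 1/(k:ℂ)^2 * X (k*x'+s) (k*y'+t)) *
            Complex.exp (-(2 * (Real.pi : ℂ) * Complex.I) * ((u:ℂ) * (x':ℂ) / (2*(H':ℂ)) + (v:ℂ) * (y':ℂ) / (2*(W':ℂ))))
        = ∑ x' ∈ Finset.Icc (-H') (H'-1), ∑ y' ∈ Finset.Icc (-W') (W'-1), ∑ s ∈ Finset.Icc (0:ℤ) (k-1), ∑ t ∈ Finset.Icc (0:ℤ) (k-1),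
            X (k*x'+s) (k*y'+t) * (1/(k:ℂ)^2 * (Complex.exp (-(2 * (Real.pi : ℂ) * Complex.I) * ((u:ℂ) * (x':ℂ) / (2*(H':ℂ)))) * Complex.exp (-(2 * (Real.pi : ℂ) * Complex.I) * ((v:ℂ) * (y':ℂ) / (2*(W':ℂ)))))) := by
          refine Finset.sum_congr rfl fun x' _ => Finset.sum_congr rfl fun y' _ => ?_
          rw [Finset.sum_mul]
          refine Finset.sum_congr rfl fun s _ => ?_
          rw [Finset.sum_mul]
          refine Finset.sum_congr rfl fun t _ => ?_
          rw [show (-(2 * (Real.pi : ℂ) * Complex.I) * ((u:ℂ) * (x':ℂ) / (2*(H':ℂ)) + (v:ℂ) * (y':ℂ) / (2*(W':ℂ))))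
              = -(2 * (Real.pi : ℂ) * Complex.I) * ((u:ℂ) * (x':ℂ) / (2*(H':ℂ))) + -(2 * (Real.pi : ℂ) * Complex.I) * ((v:ℂ) * (y':ℂ) / (2*(W':ℂ))) from by ring,
            Complex.exp_add]
          ring
      _ = ∑ x' ∈ Finset.Icc (-H') (H'-1), ∑ s ∈ Finset.Icc (0:ℤ) (k-1), ∑ y' ∈ Finset.Icc (-W') (W'-1), ∑ t ∈ Finset.Icc (0:ℤ) (k-1),
            X (k*x'+s) (k*y'+t) * (1/(k:ℂ)^2 * (Complex.exp (-(2 * (Real.pi : ℂ) * Complex.I) * ((u:ℂ) * (x':ℂ) / (2*(H':ℂ)))) * Complex.exp (-(2 * (Real.pi : ℂ) * Complex.I) * ((v:ℂ) * (y':ℂ) / (2*(W':ℂ)))))) :=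
          Finset.sum_congr rfl fun x' _ => Finset.sum_comm
      _ = ∑ x ∈ Finset.Icc (-(k*H')) (k*H'-1), ∑ y' ∈ Finset.Icc (-W') (W'-1), ∑ t ∈ Finset.Icc (0:ℤ) (k-1),
            X x (k*y'+t) * (1/(k:ℂ)^2 * (Complex.exp (-(2 * (Real.pi : ℂ) * Complex.I) * ((u:ℂ) * ((x/k : ℤ):ℂ) / (2*(H':ℂ)))) * Complex.exp (-(2 * (Real.pi : ℂ) * Complex.I) * ((v:ℂ) * (y':ℂ) / (2*(W':ℂ)))))) :=
          reindex_pair H' k hk (fun xx x' => ∑ y' ∈ Finset.Icc (-W') (W'-1), ∑ t ∈ Finset.Icc (0:ℤ) (k-1),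
            X xx (k*y'+t) * (1/(k:ℂ)^2 * (Complex.exp (-(2 * (Real.pi : ℂ) * Complex.I) * ((u:ℂ) * (x':ℂ) / (2*(H':ℂ)))) * Complex.exp (-(2 * (Real.pi : ℂ) * Complex.I) * ((v:ℂ) * (y':ℂ) / (2*(W':ℂ)))))))
      _ = ∑ x ∈ Finset.Icc (-(k*H')) (k*H'-1), ∑ y ∈ Finset.Icc (-(k*W')) (k*W'-1),
            X x y * (1/(k:ℂ)^2 * (Complex.exp (-(2 * (Real.pi : ℂ) * Complex.I) * ((u:ℂ) * ((x/k : ℤ):ℂ) / (2*(H':ℂ)))) * Complex.exp (-(2 * (Real.pi : ℂ) * Complex.I) * ((v:ℂ) * ((y/k : ℤ):ℂ) / (2*(W':ℂ)))))) :=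
          Finset.sum_congr rfl fun x _ => reindex_pair W' k hk (fun yy y' =>
            X x yy * (1/(k:ℂ)^2 * (Complex.exp (-(2 * (Real.pi : ℂ) * Complex.I) * ((u:ℂ) * ((x/k : ℤ):ℂ) / (2*(H':ℂ)))) * Complex.exp (-(2 * (Real.pi : ℂ) * Complex.I) * ((v:ℂ) * (y':ℂ) / (2*(W':ℂ)))))))
  · -- M = RHS
    symm
    calc ∑ a ∈ Finset.Icc (0:ℤ) (k-1), ∑ b ∈ Finset.Icc (0:ℤ) (k-1),
          (∑ s ∈ Finset.Icc (0:ℤ) (k-1), ∑ t ∈ Finset.Icc (0:ℤ) (k-1), 1/(k:ℂ)^2 *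
            Complex.exp ((2 * (Real.pi : ℂ) * Complex.I) * (((u + a*(2*H') : ℤ):ℂ) * (s:ℂ) / (2*((k*H' : ℤ):ℂ))
              + ((v + b*(2*W') : ℤ):ℂ) * (t:ℂ) / (2*((k*W' : ℤ):ℂ))))) / (k:ℂ)^2 *
          ∑ x ∈ Finset.Icc (-(k*H')) (k*H'-1), ∑ y ∈ Finset.Icc (-(k*W')) (k*W'-1),
            X x y * Complex.exp (-(2 * (Real.pi : ℂ) * Complex.I) * (((u + a*(2*H') : ℤ):ℂ) * (x:ℂ) / (2*((k*H' : ℤ):ℂ))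
              + ((v + b*(2*W') : ℤ):ℂ) * (y:ℂ) / (2*((k*W' : ℤ):ℂ))))
        = ∑ a ∈ Finset.Icc (0:ℤ) (k-1), ∑ b ∈ Finset.Icc (0:ℤ) (k-1),
            (((∑ s ∈ Finset.Icc (0:ℤ) (k-1), Complex.exp ((2 * (Real.pi : ℂ) * Complex.I) * (((u + a*(2*H') : ℤ):ℂ) * (s:ℂ) / (2*((k*H' : ℤ):ℂ))))) / (k:ℂ)^2) * ((∑ t ∈ Finset.Icc (0:ℤ) (k-1), Complex.exp ((2 * (Real.pi : ℂ) * Complex.I) * (((v + b*(2*W') : ℤ):ℂ) * (t:ℂ) / (2*((k*W' : ℤ):ℂ))))) / (k:ℂ)^2)) *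
            ∑ x ∈ Finset.Icc (-(k*H')) (k*H'-1), ∑ y ∈ Finset.Icc (-(k*W')) (k*W'-1), X x y * (Complex.exp (-(2 * (Real.pi : ℂ) * Complex.I) * (((u + a*(2*H') : ℤ):ℂ) * (x:ℂ) / (2*((k*H' : ℤ):ℂ)))) * Complex.exp (-(2 * (Real.pi : ℂ) * Complex.I) * (((v + b*(2*W') : ℤ):ℂ) * (y:ℂ) / (2*((k*W' : ℤ):ℂ))))) := by
          refine Finset.sum_congr rfl fun a _ => Finset.sum_congr rfl fun b _ => ?_
          have hβ : (∑ s ∈ Finset.Icc (0:ℤ) (k-1), ∑ t ∈ Finset.Icc (0:ℤ) (k-1), 1/(k:ℂ)^2 *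
              Complex.exp ((2 * (Real.pi : ℂ) * Complex.I) * (((u + a*(2*H') : ℤ):ℂ) * (s:ℂ) / (2*((k*H' : ℤ):ℂ))
                + ((v + b*(2*W') : ℤ):ℂ) * (t:ℂ) / (2*((k*W' : ℤ):ℂ)))))
              = 1/(k:ℂ)^2 * ((∑ s ∈ Finset.Icc (0:ℤ) (k-1), Complex.exp ((2 * (Real.pi : ℂ) * Complex.I) * (((u + a*(2*H') : ℤ):ℂ) * (s:ℂ) / (2*((k*H' : ℤ):ℂ))))) * (∑ t ∈ Finset.Icc (0:ℤ) (k-1), Complex.exp ((2 * (Real.pi : ℂ) * Complex.I) * (((v + b*(2*W') : ℤ):ℂ) * (t:ℂ) / (2*((k*W' : ℤ):ℂ)))))) := by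
            rw [Finset.sum_mul_sum, Finset.mul_sum]
            refine Finset.sum_congr rfl fun s _ => ?_
            rw [Finset.mul_sum]
            refine Finset.sum_congr rfl fun t _ => ?_
            rw [← Complex.exp_add]
            congr 2
            ring
          have hdft : (∑ x ∈ Finset.Icc (-(k*H')) (k*H'-1), ∑ y ∈ Finset.Icc (-(k*W')) (k*W'-1),
              X x y * Complex.exp (-(2 * (Real.pi : ℂ) * Complex.I) * (((u + a*(2*H') : ℤ):ℂ) * (x:ℂ) / (2*((k*H' : ℤ):ℂ))
                + ((v + b*(2*W') : ℤ):ℂ) * (y:ℂ) / (2*((k*W' : ℤ):ℂ)))))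
              = ∑ x ∈ Finset.Icc (-(k*H')) (k*H'-1), ∑ y ∈ Finset.Icc (-(k*W')) (k*W'-1), X x y * (Complex.exp (-(2 * (Real.pi : ℂ) * Complex.I) * (((u + a*(2*H') : ℤ):ℂ) * (x:ℂ) / (2*((k*H' : ℤ):ℂ)))) * Complex.exp (-(2 * (Real.pi : ℂ) * Complex.I) * (((v + b*(2*W') : ℤ):ℂ) * (y:ℂ) / (2*((k*W' : ℤ):ℂ))))) := by
            refine Finset.sum_congr rfl fun x _ => Finset.sum_congr rfl fun y _ => ?_
            rw [← Complex.exp_add]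
            congr 2
            ring
          rw [hβ, hdft]
          ring
      _ = ∑ x ∈ Finset.Icc (-(k*H')) (k*H'-1), ∑ y ∈ Finset.Icc (-(k*W')) (k*W'-1),
            X x y * ((∑ a ∈ Finset.Icc (0:ℤ) (k-1), ((∑ s ∈ Finset.Icc (0:ℤ) (k-1), Complex.exp ((2 * (Real.pi : ℂ) * Complex.I) * (((u + a*(2*H') : ℤ):ℂ) * (s:ℂ) / (2*((k*H' : ℤ):ℂ))))) / (k:ℂ)^2) * Complex.exp (-(2 * (Real.pi : ℂ) * Complex.I) * (((u + a*(2*H') : ℤ):ℂ) * (x:ℂ) / (2*((k*H' : ℤ):ℂ))))) * (∑ b ∈ Finset.Icc (0:ℤ) (k-1), ((∑ t ∈ Finset.Icc (0:ℤ) (k-1), Complex.exp ((2 * (Real.pi : ℂ) * Complex.I) * (((v + b*(2*W') : ℤ):ℂ) * (t:ℂ) / (2*((k*W' : ℤ):ℂ))))) / (k:ℂ)^2) * Complex.exp (-(2 * (Real.pi : ℂ) * Complex.I) * (((v + b*(2*W') : ℤ):ℂ) * (y:ℂ) / (2*((k*W' : ℤ):ℂ)))))) :=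
          swap_factor (Finset.Icc (0:ℤ) (k-1)) (Finset.Icc (0:ℤ) (k-1)) (Finset.Icc (-(k*H')) (k*H'-1)) (Finset.Icc (-(k*W')) (k*W'-1)) X
            (fun a => (∑ s ∈ Finset.Icc (0:ℤ) (k-1), Complex.exp ((2 * (Real.pi : ℂ) * Complex.I) * (((u + a*(2*H') : ℤ):ℂ) * (s:ℂ) / (2*((k*H' : ℤ):ℂ))))) / (k:ℂ)^2) (fun b => (∑ t ∈ Finset.Icc (0:ℤ) (k-1), Complex.exp ((2 * (Real.pi : ℂ) * Complex.I) * (((v + b*(2*W') : ℤ):ℂ) * (t:ℂ) / (2*((k*W' : ℤ):ℂ))))) / (k:ℂ)^2)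
            (fun a x => Complex.exp (-(2 * (Real.pi : ℂ) * Complex.I) * (((u + a*(2*H') : ℤ):ℂ) * (x:ℂ) / (2*((k*H' : ℤ):ℂ))))) (fun b y => Complex.exp (-(2 * (Real.pi : ℂ) * Complex.I) * (((v + b*(2*W') : ℤ):ℂ) * (y:ℂ) / (2*((k*W' : ℤ):ℂ)))))
      _ = ∑ x ∈ Finset.Icc (-(k*H')) (k*H'-1), ∑ y ∈ Finset.Icc (-(k*W')) (k*W'-1),
            X x y * (1/(k:ℂ)^2 * (Complex.exp (-(2 * (Real.pi : ℂ) * Complex.I) * ((u:ℂ) * ((x/k : ℤ):ℂ) / (2*(H':ℂ)))) * Complex.exp (-(2 * (Real.pi : ℂ) * Complex.I) * ((v:ℂ) * ((y/k : ℤ):ℂ) / (2*(W':ℂ)))))) := by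
          refine Finset.sum_congr rfl fun x _ => Finset.sum_congr rfl fun y _ => ?_
          have hA : (∑ a ∈ Finset.Icc (0:ℤ) (k-1), ((∑ s ∈ Finset.Icc (0:ℤ) (k-1), Complex.exp ((2 * (Real.pi : ℂ) * Complex.I) * (((u + a*(2*H') : ℤ):ℂ) * (s:ℂ) / (2*((k*H' : ℤ):ℂ))))) / (k:ℂ)^2) * Complex.exp (-(2 * (Real.pi : ℂ) * Complex.I) * (((u + a*(2*H') : ℤ):ℂ) * (x:ℂ) / (2*((k*H' : ℤ):ℂ)))))
              = (k:ℂ) * Complex.exp (-(2 * (Real.pi : ℂ) * Complex.I) * ((u:ℂ) * ((x/k : ℤ):ℂ) / (2*(H':ℂ)))) / (k:ℂ)^2 := by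
            rw [← alias1 H' k hk hH' u x, Finset.sum_div]
            exact Finset.sum_congr rfl fun a _ => by ring
          have hB : (∑ b ∈ Finset.Icc (0:ℤ) (k-1), ((∑ t ∈ Finset.Icc (0:ℤ) (k-1), Complex.exp ((2 * (Real.pi : ℂ) * Complex.I) * (((v + b*(2*W') : ℤ):ℂ) * (t:ℂ) / (2*((k*W' : ℤ):ℂ))))) / (k:ℂ)^2) * Complex.exp (-(2 * (Real.pi : ℂ) * Complex.I) * (((v + b*(2*W') : ℤ):ℂ) * (y:ℂ) / (2*((k*W' : ℤ):ℂ)))))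
              = (k:ℂ) * Complex.exp (-(2 * (Real.pi : ℂ) * Complex.I) * ((v:ℂ) * ((y/k : ℤ):ℂ) / (2*(W':ℂ)))) / (k:ℂ)^2 := by
            rw [← alias1 W' k hk hW' v y, Finset.sum_div]
            exact Finset.sum_congr rfl fun b _ => by ring
          rw [hA, hB]
          field_simp
end
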